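/- Let G be a finite group, H ⊴ G of index 2, and let χ, ψ be irreducible characters of H with χ^x ≠ χ and ψ^x = ψ for x ∈ G \ H. Write Ind_H^G(ψ) = ψ⁺ + ψ⁻ with ψ⁺ ≠ ψ⁻ irreducible. If Θ is a character of H fixed by conjugation by x, containing χ with multiplicity a and ψ with multiplicity b, and Ind_H^G(Θ) = Θ⁺ + Θ⁻ where Θ⁻ = ε ⊗ Θ⁺, then Ind_H^G(χ) occurs in Θ⁺ with multiplicity a, and the multiplicities c of ψ⁺ in Θ⁺ and c̃ of ψ⁻ in Θ⁺ satisfy c + c̃ = b. -/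
import Mathlib


open scoped Classical

/-- `χ : G → ℂ` is the character of some finite-dimensional complex representation. -/
def IsChar {G : Type} [Group G] (χ : G → ℂ) : Prop :=
  ∃ ρ : FDRep ℂ G, ρ.character = χ

/-- `χ : G → ℂ` is the character of an irreducible (simple) finite-dimensional complex
representation. -/
def IsIrrChar {G : Type} [Group G] (χ : G → ℂ) : Prop :=
  ∃ ρ : FDRep ℂ G, CategoryTheory.Simple ρ ∧ ρ.character = χ

/-- The induced class function `Ind_H^G χ`. -/
noncomputable def ind {G : Type} [Group G] [Fintype G] (H : Subgroup G) (χ : ↥H → ℂ) :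
    G → ℂ :=
  fun g => (Nat.card H : ℂ)⁻¹ *
    ∑ t : G, if h : t⁻¹ * g * t ∈ H then χ ⟨t⁻¹ * g * t, h⟩ else 0

/-- The conjugate `χ^x` of a class function of a normal subgroup `H`,
`χ^x (h) = χ (x h x⁻¹)`. -/
def conjChar {G : Type} [Group G] (H : Subgroup G) [H.Normal] (x : G) (χ : ↥H → ℂ) :
    ↥H → ℂ :=
  fun h => χ ⟨x * (h : G) * x⁻¹, Subgroup.Normal.conj_mem ‹H.Normal› (h : G) h.2 x⟩

/-- The nontrivial linear character of `G` with kernel `H` (of index 2). -/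
noncomputable def epsChar {G : Type} [Group G] (H : Subgroup G) : G → ℂ :=
  fun g => if g ∈ H then 1 else -1

/-- The inner product of class functions on a finite group. -/
noncomputable def innerChar {G : Type} [Group G] [Fintype G] (φ ψ : G → ℂ) : ℂ :=
  (Nat.card G : ℂ)⁻¹ * ∑ g : G, φ g * (starRingEnd ℂ) (ψ g)

section helpers

set_option linter.unusedSectionVars false

variable {G : Type} [Group G] [Fintype G] (H : Subgroup G) [H.Normal]

lemma char_classFn {K : Type} [Group K] {φ : K → ℂ} (h : IsChar φ) (s k : K) :
    φ (s⁻¹ * k * s) = φ k := by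
  obtain ⟨ρ, rfl⟩ := h
  have := FDRep.char_mul_comm ρ (s⁻¹ * k) s
  rw [← this]
  congr 1
  group

lemma ind_eq_zero {φ : ↥H → ℂ} {g : G} (hg : g ∉ H) : ind H φ g = 0 := by
  unfold ind
  have h0 : ∀ t : G, (if h : t⁻¹ * g * t ∈ H then φ ⟨t⁻¹ * g * t, h⟩ else 0) = 0 := by
    intro t
    rw [dif_neg]
    intro hmem
    have h2 : t * (t⁻¹ * g * t) * t⁻¹ = g := by group
    exact hg (h2 ▸ Subgroup.Normal.conj_mem ‹H.Normal› _ hmem t)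
  simp [h0]

lemma memconj {x : G} (h : ↥H) : x⁻¹ * (h : G) * x ∈ H := by
  have := Subgroup.Normal.conj_mem ‹H.Normal› _ h.2 x⁻¹
  simpa using this

lemma ind_apply_mem {φ : ↥H → ℂ}
    (hφ : ∀ s k : ↥H, φ (s⁻¹ * k * s) = φ k)
    (hindex : H.index = 2) {x : G} (hx : x ∉ H) (h : ↥H) :
    ind H φ (h : G) = φ h + φ ⟨x⁻¹ * (h : G) * x, memconj H h⟩ := by
  classical
  have hne : (Nat.card H : ℂ) ≠ 0 := Nat.cast_ne_zero.mpr Nat.card_pos.ne'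
  have key : ∀ t : G, (if ht : t⁻¹ * (h : G) * t ∈ H then φ ⟨t⁻¹ * (h : G) * t, ht⟩ else 0)
      = if t ∈ H then φ h else φ ⟨x⁻¹ * (h : G) * x, memconj H h⟩ := by
    intro t
    have hmem : t⁻¹ * (h : G) * t ∈ H := by
      have := Subgroup.Normal.conj_mem ‹H.Normal› _ h.2 t⁻¹
      simpa using this
    rw [dif_pos hmem]
    by_cases ht : t ∈ H
    · rw [if_pos ht]
      have : (⟨t⁻¹ * (h : G) * t, hmem⟩ : ↥H) = (⟨t, ht⟩ : ↥H)⁻¹ * h * ⟨t, ht⟩ := rfl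
      rw [this, hφ]
    · rw [if_neg ht]
      have hs : x⁻¹ * t ∈ H := by
        rw [Subgroup.mul_mem_iff_of_index_two hindex]
        simp [hx, ht, inv_mem_iff]
      have heq : t⁻¹ * (h : G) * t = (x⁻¹*t)⁻¹ * (x⁻¹ * (h : G) * x) * (x⁻¹*t) := by group
      have : (⟨t⁻¹ * (h : G) * t, hmem⟩ : ↥H)
          = (⟨x⁻¹*t, hs⟩ : ↥H)⁻¹ * ⟨x⁻¹ * (h : G) * x, memconj H h⟩ * ⟨x⁻¹*t, hs⟩ := by
        ext; simpa using heq
      rw [this, hφ]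
  unfold ind
  rw [Finset.sum_congr rfl (fun t _ => key t), Finset.sum_ite, Finset.sum_const,
    Finset.sum_const]
  have hc1 : (Finset.univ.filter (· ∈ H)).card = Nat.card H := by
    rw [Nat.card_eq_fintype_card, Fintype.card_subtype]
  have hc2 : (Finset.univ.filter (fun t => ¬ t ∈ H)).card = Nat.card H := by
    have hadd := Finset.card_filter_add_card_filter_not
      (s := (Finset.univ : Finset G)) (p := (· ∈ H))
    have hG : Fintype.card G = 2 * Nat.card H := by
      rw [← Nat.card_eq_fintype_card, ← H.index_mul_card, hindex]
    have hu : (Finset.univ : Finset G).card = Fintype.card G := Finset.card_univ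
    omega
  rw [hc1, hc2]
  field_simp
  ring

lemma conj_fix {x : G} {Θ : ↥H → ℂ} (hΘx : conjChar H x Θ = Θ) (h : ↥H)
    {pf : x⁻¹ * (h : G) * x ∈ H} : Θ ⟨x⁻¹ * (h : G) * x, pf⟩ = Θ h := by
  have := congr_fun hΘx ⟨x⁻¹ * (h : G) * x, pf⟩
  rw [← this]
  unfold conjChar
  congr 1
  ext
  simp [mul_assoc]

lemma conj_fix' {x : G} {Θ : ↥H → ℂ} (hΘx : conjChar H x Θ = Θ) (h : ↥H)
    {pf : x * (h : G) * x⁻¹ ∈ H} : Θ ⟨x * (h : G) * x⁻¹, pf⟩ = Θ h := by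
  have := congr_fun hΘx h
  rw [← this]
  rfl

lemma master {x : G} (hindex : H.index = 2) (hx : x ∉ H)
    {Θ : ↥H → ℂ} (hΘ : ∀ s k : ↥H, Θ (s⁻¹ * k * s) = Θ k)
    (hΘx : conjChar H x Θ = Θ)
    {Θp : G → ℂ} (hindΘ : ind H Θ = Θp + epsChar H * Θp)
    {φ : ↥H → ℂ} (hφ : ∀ s k : ↥H, φ (s⁻¹ * k * s) = φ k) :
    innerChar Θp (ind H φ) = innerChar Θ φ := by
  classical
  have hne : (Nat.card H : ℂ) ≠ 0 := Nat.cast_ne_zero.mpr Nat.card_pos.ne'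
  have hG : (Nat.card G : ℂ) = 2 * (Nat.card H : ℂ) := by
    rw [← H.index_mul_card, hindex]; push_cast; ring
  -- step 1
  have step1 : innerChar (ind H Θ) (ind H φ) = 2 * innerChar Θp (ind H φ) := by
    rw [hindΘ]
    unfold innerChar
    have hterm : ∀ g : G, ((Θp + epsChar H * Θp) g) * (starRingEnd ℂ) (ind H φ g)
        = 2 * (Θp g * (starRingEnd ℂ) (ind H φ g)) := by
      intro g
      by_cases hg : g ∈ H
      · simp only [Pi.add_apply, Pi.mul_apply, epsChar, if_pos hg]
        ring
      · rw [ind_eq_zero H hg]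
        simp
    rw [Finset.sum_congr rfl (fun g _ => hterm g), ← Finset.mul_sum]
    ring
  -- step 2
  have step2 : innerChar (ind H Θ) (ind H φ) = 2 * innerChar Θ φ := by
    unfold innerChar
    set F : G → ℂ := fun g => ind H Θ g * (starRingEnd ℂ) (ind H φ g) with hF
    have hsplit : ∑ g : G, F g = ∑ h : ↥H, F (h : G) := by
      rw [← Finset.sum_filter_add_sum_filter_not Finset.univ (· ∈ H) F]
      have h2 : ∑ g ∈ Finset.univ.filter (fun g => ¬ g ∈ H), F g = 0 :=
        Finset.sum_eq_zero (fun g hg => by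
          simp only [Finset.mem_filter] at hg
          simp [hF, ind_eq_zero H hg.2])
      rw [h2, add_zero]
      exact Finset.sum_subtype _ (by simp) F
    have hval : ∀ h : ↥H, F (h : G)
        = 2 * Θ h * ((starRingEnd ℂ) (φ h)
            + (starRingEnd ℂ) (φ ⟨x⁻¹ * (h : G) * x, memconj H h⟩)) := by
      intro h
      rw [hF]
      simp only
      rw [ind_apply_mem H hΘ hindex hx h, ind_apply_mem H hφ hindex hx h,
        conj_fix H hΘx h, map_add]
      ring
    have hreindex : ∑ h : ↥H, Θ h * (starRingEnd ℂ) (φ ⟨x⁻¹ * (h : G) * x, memconj H h⟩)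
        = ∑ h : ↥H, Θ h * (starRingEnd ℂ) (φ h) := by
      let e : ↥H ≃ ↥H :=
        { toFun := fun h => ⟨x * (h : G) * x⁻¹,
            Subgroup.Normal.conj_mem ‹H.Normal› (h : G) h.2 x⟩
          invFun := fun h => ⟨x⁻¹ * (h : G) * x, memconj H h⟩
          left_inv := fun h => Subtype.ext
            (by show x⁻¹ * (x * (h : G) * x⁻¹) * x = (h : G); group)
          right_inv := fun h => Subtype.ext
            (by show x * (x⁻¹ * (h : G) * x) * x⁻¹ = (h : G); group) }
      refine (Fintype.sum_equiv e _ _ ?_).symm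
      intro k
      have h1 : Θ (e k) = Θ k := conj_fix' H hΘx k
      have h2 : (⟨x⁻¹ * ((e k : ↥H) : G) * x, memconj H (e k)⟩ : ↥H) = k :=
        Subtype.ext (by show x⁻¹ * (x * (k : G) * x⁻¹) * x = (k : G); group)
      rw [h1, h2]
    have hsum : ∑ h : ↥H, F (h : G)
        = 2 * (∑ h : ↥H, Θ h * (starRingEnd ℂ) (φ h))
          + 2 * (∑ h : ↥H, Θ h * (starRingEnd ℂ) (φ ⟨x⁻¹ * (h : G) * x, memconj H h⟩)) := by
      have hval2 : ∀ h : ↥H, F (h : G)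
          = 2 * (Θ h * (starRingEnd ℂ) (φ h))
            + 2 * (Θ h * (starRingEnd ℂ) (φ ⟨x⁻¹ * (h : G) * x, memconj H h⟩)) := by
        intro h; rw [hval h]; ring
      rw [Finset.sum_congr rfl (fun h _ => hval2 h), Finset.sum_add_distrib,
        ← Finset.mul_sum, ← Finset.mul_sum]
    rw [hsplit, hsum, hreindex, hG]
    have h2 : (2 : ℂ) ≠ 0 := two_ne_zero
    field_simp
    ring
  -- combine
  have := step1.symm.trans step2
  have h2 : (2 : ℂ) ≠ 0 := two_ne_zero
  exact mul_left_cancel₀ h2 this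

end helpers

/-- Clifford-theoretic multiplicity scheme: if `χ, ψ ∈ Irr(H)` with `χ^x ≠ χ`,
`ψ^x = ψ`, `Ind_H^G ψ = ψ⁺ + ψ⁻`, and `Θ` is an `x`-invariant character of `H`
containing `χ` with multiplicity `a` and `ψ` with multiplicity `b`, and
`Ind_H^G Θ = Θ⁺ + ε ⊗ Θ⁺`, then `Ind_H^G χ` occurs in `Θ⁺` with multiplicity `a`
and the multiplicities of `ψ⁺` and `ψ⁻` in `Θ⁺` sum to `b`. -/
theorem clifford_multiplicity_scheme
    {G : Type} [Group G] [Fintype G] (H : Subgroup G) [H.Normal]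
    (hindex : H.index = 2) (x : G) (hx : x ∉ H)
    (χ ψ : ↥H → ℂ) (hχ : IsIrrChar χ) (hψ : IsIrrChar ψ)
    (hχx : conjChar H x χ ≠ χ) (hψx : conjChar H x ψ = ψ)
    (ψp ψm : G → ℂ) (hψp : IsIrrChar ψp) (hψm : IsIrrChar ψm) (hpm : ψp ≠ ψm)
    (hindψ : ind H ψ = ψp + ψm)
    (Θ : ↥H → ℂ) (hΘ : IsChar Θ) (hΘx : conjChar H x Θ = Θ)
    (a b : ℕ) (ha : innerChar Θ χ = (a : ℂ)) (hb : innerChar Θ ψ = (b : ℂ))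
    (Θp : G → ℂ) (hΘp : IsChar Θp) (hindΘ : ind H Θ = Θp + epsChar H * Θp) :
    innerChar Θp (ind H χ) = (a : ℂ) ∧
      innerChar Θp ψp + innerChar Θp ψm = (b : ℂ) := by
  have hχc : ∀ s k : ↥H, χ (s⁻¹ * k * s) = χ k := by
    obtain ⟨ρ, _, hr⟩ := hχ
    exact char_classFn ⟨ρ, hr⟩
  have hψc : ∀ s k : ↥H, ψ (s⁻¹ * k * s) = ψ k := by
    obtain ⟨ρ, _, hr⟩ := hψ
    exact char_classFn ⟨ρ, hr⟩
  have hΘc : ∀ s k : ↥H, Θ (s⁻¹ * k * s) = Θ k := char_classFn hΘ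
  constructor
  · rw [master H hindex hx hΘc hΘx hindΘ hχc, ha]
  · have hadd : innerChar Θp ψp + innerChar Θp ψm = innerChar Θp (ψp + ψm) := by
      unfold innerChar
      rw [← mul_add, ← Finset.sum_add_distrib]
      congr 1
      apply Finset.sum_congr rfl
      intro g _
      simp only [Pi.add_apply, map_add]
      ring
    rw [hadd, ← hindψ, master H hindex hx hΘc hΘx hindΘ hψc, hb]
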